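/- arXiv:1107.4018 — 2 statements merged into one kernel-verified Lean document; each statement's English description precedes it below -/
import Mathlib

section
/- Let μ be a finite measure on a measurable space M with 0 < V < ∞, and let f, h : M → ℝ be measurable functions such that e^{−f}, e^{h}, e^{(h−f)/2} and (f+h)e^{−f} are μ-integrable and ∫_M e^{−f} dμ = ∫_M e^{h} dμ = V. Then ∫_M (f + h) e^{−f} dμ ≤ 0. -/
open MeasureTheory Real

/-- If `e^{−f}`, `e^{h}`, `e^{(h−f)/2}` and `(f+h)e^{−f}` are integrable with
`∫ e^{−f} dμ = ∫ e^{h} dμ = V`, `0 < V < ∞`, then `∫ (f+h) e^{−f} dμ ≤ 0`. -/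
theorem integral_add_mul_exp_neg_nonpos
    {M : Type*} [MeasurableSpace M] (μ : Measure M) [IsFiniteMeasure μ]
    (V : ℝ) (hV : 0 < V)
    (f h : M → ℝ) (hf : Measurable f) (hh : Measurable h)
    (hfint : Integrable (fun x => Real.exp (-f x)) μ)
    (hhint : Integrable (fun x => Real.exp (h x)) μ)
    (hmixint : Integrable (fun x => Real.exp ((h x - f x) / 2)) μ)
    (hfhint : Integrable (fun x => (f x + h x) * Real.exp (-f x)) μ)
    (hfnorm : ∫ x, Real.exp (-f x) ∂μ = V)
    (hhnorm : ∫ x, Real.exp (h x) ∂μ = V) :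
    ∫ x, (f x + h x) * Real.exp (-f x) ∂μ ≤ 0 := by
  have key : ∀ x, (f x + h x) * Real.exp (-f x)
      ≤ 2 * Real.exp ((h x - f x) / 2) - 2 * Real.exp (-f x) := by
    intro x
    have h1 : (f x + h x) / 2 + 1 ≤ Real.exp ((f x + h x) / 2) := Real.add_one_le_exp _
    have h2 : Real.exp ((f x + h x) / 2) * Real.exp (-f x)
        = Real.exp ((h x - f x) / 2) := by
      rw [← Real.exp_add]; ring_nf
    nlinarith [Real.exp_pos (-f x)]
  have cs : ∀ x, Real.exp ((h x - f x) / 2)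
      ≤ (Real.exp (-f x) + Real.exp (h x)) / 2 := by
    intro x
    have e1 : Real.exp ((h x - f x) / 2)
        = Real.exp (-f x / 2) * Real.exp (h x / 2) := by
      rw [← Real.exp_add]; ring_nf
    have e2 : Real.exp (-f x / 2) * Real.exp (-f x / 2) = Real.exp (-f x) := by
      rw [← Real.exp_add]; ring_nf
    have e3 : Real.exp (h x / 2) * Real.exp (h x / 2) = Real.exp (h x) := by
      rw [← Real.exp_add]; ring_nf
    nlinarith [sq_nonneg (Real.exp (-f x / 2) - Real.exp (h x / 2))]
  have hmixle : ∫ x, Real.exp ((h x - f x) / 2) ∂μ ≤ V := by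
    have := integral_mono hmixint ((hfint.add hhint).div_const 2) cs
    simp only [Pi.add_apply] at this
    rw [integral_div, integral_add hfint hhint, hfnorm, hhnorm] at this
    linarith
  have step : ∫ x, (f x + h x) * Real.exp (-f x) ∂μ
      ≤ ∫ x, (2 * Real.exp ((h x - f x) / 2) - 2 * Real.exp (-f x)) ∂μ :=
    integral_mono hfhint ((hmixint.const_mul 2).sub (hfint.const_mul 2)) key
  rw [integral_sub (hmixint.const_mul 2) (hfint.const_mul 2),
    integral_const_mul, integral_const_mul, hfnorm] at step
  linarith
end

section
/- Let μ be a finite measure on a measurable space M with 0 < V < ∞, and let f, h : M → ℝ be measurable functions such that e^{−f}, e^{h}, e^{(h−f)/2} and (f+h)e^{−f} are μ-integrable and ∫_M e^{−f} dμ = ∫_M e^{h} dμ = V. Then ∫_M (e^{−f/2} − e^{h/2})² dμ ≤ 2V (1 − exp( (1/(2V)) ∫_M (f+h) e^{−f} dμ )). -/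
open MeasureTheory Real

/-!
Expanding the square gives `∫ (e^{-f/2} - e^{h/2})² = 2V - 2 ∫ e^{(h-f)/2}`, and
`e^{(h-f)/2} = e^{(f+h)/2} e^{-f}`, so the claim is Jensen's inequality for `exp` with respect
to the weight `e^{-f}` of total mass `V`.
-/

theorem integral_mul_exp_div_integral_le_integral_exp_mul {M : Type*} [MeasurableSpace M]
    {μ : Measure M} {w g : M → ℝ} (hw : 0 ≤ w) (hw_int : Integrable w μ)
    (hgw_int : Integrable (fun x => g x * w x) μ)
    (hexp_int : Integrable (fun x => exp (g x) * w x) μ) :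
    (∫ x, w x ∂μ) * exp ((∫ x, g x * w x ∂μ) / ∫ x, w x ∂μ) ≤ ∫ x, exp (g x) * w x ∂μ := by
  set V := ∫ x, w x ∂μ
  rcases eq_or_ne V 0 with hV | hV
  · rw [hV, zero_mul]
    exact integral_nonneg fun x => mul_nonneg (exp_nonneg _) (hw x)
  set c := (∫ x, g x * w x ∂μ) / V
  -- the tangent line of `exp` at the weighted mean `c`
  have tangent : ∀ x, exp c * ((1 - c) * w x + g x * w x) ≤ exp (g x) * w x := fun x => by
    calc exp c * ((1 - c) * w x + g x * w x) = exp c * (1 + g x - c) * w x := by ring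
      _ ≤ exp c * exp (g x - c) * w x := by
          gcongr
          · exact hw x
          · linarith [add_one_le_exp (g x - c)]
      _ = exp (g x) * w x := by rw [← exp_add]; ring_nf
  have tangent_int : Integrable (fun x => exp c * ((1 - c) * w x + g x * w x)) μ :=
    ((hw_int.const_mul (1 - c)).add hgw_int).const_mul (exp c)
  calc V * exp c = ∫ x, exp c * ((1 - c) * w x + g x * w x) ∂μ := by
        have hcV : c * V = ∫ x, g x * w x ∂μ := div_mul_cancel₀ _ hV
        rw [integral_const_mul, integral_add (hw_int.const_mul _) hgw_int, integral_const_mul,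
          ← hcV]
        ring
    _ ≤ ∫ x, exp (g x) * w x ∂μ := integral_mono tangent_int hexp_int tangent

theorem exp_neg_half_sub_exp_half_sq (a b : ℝ) :
    (exp (-a / 2) - exp (b / 2)) ^ 2 = exp (-a) + exp b - 2 * exp ((b - a) / 2) := by
  simp only [sub_sq, ← exp_nat_mul, mul_assoc, ← exp_add]
  ring_nf

theorem square_diff_exp_integral_le_general
    {M : Type*} [MeasurableSpace M] (μ : Measure M)
    (V : ℝ)
    (f h : M → ℝ)
    (hfint : Integrable (fun x => Real.exp (-f x)) μ)
    (hhint : Integrable (fun x => Real.exp (h x)) μ)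
    (hmixint : Integrable (fun x => Real.exp ((h x - f x) / 2)) μ)
    (hfhint : Integrable (fun x => (f x + h x) * Real.exp (-f x)) μ)
    (hfnorm : ∫ x, Real.exp (-f x) ∂μ = V)
    (hhnorm : ∫ x, Real.exp (h x) ∂μ = V) :
    ∫ x, (Real.exp (-f x / 2) - Real.exp (h x / 2)) ^ 2 ∂μ ≤
      2 * V * (1 - Real.exp ((1 / (2 * V)) * ∫ x, (f x + h x) * Real.exp (-f x) ∂μ)) := by
  have mix_eq : ∀ x, exp ((h x - f x) / 2) = exp ((f x + h x) / 2) * exp (-f x) := fun x => by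
    rw [← exp_add]; ring_nf
  have jensen := integral_mul_exp_div_integral_le_integral_exp_mul (g := fun x => (f x + h x) / 2)
    (fun x => (exp_pos (-f x)).le) hfint
    ((hfhint.div_const 2).congr (ae_of_all _ fun x => by ring))
    (hmixint.congr (ae_of_all _ fun x => mix_eq x))
  simp only [← mix_eq, div_mul_eq_mul_div, integral_div, hfnorm] at jensen
  calc ∫ x, (exp (-f x / 2) - exp (h x / 2)) ^ 2 ∂μ
      = 2 * V - 2 * ∫ x, exp ((h x - f x) / 2) ∂μ := by
        simp only [exp_neg_half_sub_exp_half_sq]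
        rw [integral_sub (μ := μ) (f := fun x => exp (-f x) + exp (h x))
          (hfint.add hhint) (hmixint.const_mul 2), integral_add hfint hhint,
          integral_const_mul, hfnorm, hhnorm]
        ring
    _ ≤ 2 * V * (1 - exp ((1 / (2 * V)) * ∫ x, (f x + h x) * exp (-f x) ∂μ)) := by
        rw [show (1 / (2 * V)) * ∫ x, (f x + h x) * exp (-f x) ∂μ
          = (∫ x, (f x + h x) * exp (-f x) ∂μ) / 2 / V by ring]
        linarith

/-- Under the normalizations `∫ e^{−f} dμ = ∫ e^{h} dμ = V`, one has
`∫ (e^{−f/2} − e^{h/2})² dμ ≤ 2V (1 − exp((1/(2V)) ∫ (f+h) e^{−f} dμ))`. -/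
theorem square_diff_exp_integral_le
    {M : Type*} [MeasurableSpace M] (μ : Measure M) [IsFiniteMeasure μ]
    (V : ℝ) (hV : 0 < V)
    (f h : M → ℝ) (hf : Measurable f) (hh : Measurable h)
    (hfint : Integrable (fun x => Real.exp (-f x)) μ)
    (hhint : Integrable (fun x => Real.exp (h x)) μ)
    (hmixint : Integrable (fun x => Real.exp ((h x - f x) / 2)) μ)
    (hfhint : Integrable (fun x => (f x + h x) * Real.exp (-f x)) μ)
    (hfnorm : ∫ x, Real.exp (-f x) ∂μ = V)
    (hhnorm : ∫ x, Real.exp (h x) ∂μ = V) :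
    ∫ x, (Real.exp (-f x / 2) - Real.exp (h x / 2)) ^ 2 ∂μ ≤
      2 * V * (1 - Real.exp ((1 / (2 * V)) * ∫ x, (f x + h x) * Real.exp (-f x) ∂μ)) :=
  square_diff_exp_integral_le_general μ V f h hfint hhint hmixint hfhint hfnorm hhnorm
end
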